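/- Let W be a wall of sidelength k in a graph G and let (A, B) be a separation of G of order k' < k. Then exactly one of the sets A \ B, B \ A contains at least k - k' full rows of W and at least k - k' full columns of W. -/
import Mathlib


/-- A separation `(A, B)` of a graph `G`: `A ∪ B = V(G)` and there is no edge between
`A \ B` and `B \ A`.  Its order is `|A ∩ B|`. -/
def IsSeparation {V : Type*} (G : SimpleGraph V) (A B : Set V) : Prop :=
  A ∪ B = Set.univ ∧ ∀ a ∈ A \ B, ∀ b ∈ B \ A, ¬ G.Adj a b

/-- An (abstract) wall of sidelength `k` in `G`, given by its `k` rows and `k` columns: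
each row and each column induces a connected subgraph (a path), the rows are pairwise
disjoint, the columns are pairwise disjoint, and every row meets every column. -/
structure IsWall {V : Type*} (G : SimpleGraph V) (k : ℕ)
    (rows cols : Fin k → Set V) : Prop where
  rows_conn : ∀ i, (G.induce (rows i)).Connected
  cols_conn : ∀ j, (G.induce (cols j)).Connected
  rows_disj : ∀ i i', i ≠ i' → Disjoint (rows i) (rows i')
  cols_disj : ∀ j j', j ≠ j' → Disjoint (cols j) (cols j')
  row_meets_col : ∀ i j, (rows i ∩ cols j).Nonempty

/-- `Γ` contains at least `m` full rows (resp. columns) from the family `rows`. -/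
def ContainsFullRows {V : Type*} {k : ℕ} (rows : Fin k → Set V) (m : ℕ)
    (Γ : Set V) : Prop :=
  m ≤ {i : Fin k | rows i ⊆ Γ}.ncard

/-- Membership in the tangle `T_W` governed by a wall `W` of sidelength `k` (given by its
rows and columns): separations `(A, B)` of order less than `⌈k/3⌉` such that `B \ A`
contains at least `k - ⌈k/3⌉ + 1` full rows and full columns of `W`.
(Note `⌈k/3⌉ = (k + 2) / 3` in natural numbers.) -/
def InWallTangle {V : Type*} (G : SimpleGraph V) (k : ℕ)
    (rows cols : Fin k → Set V) (A B : Set V) : Prop :=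
  IsSeparation G A B ∧ (A ∩ B).ncard < (k + 2) / 3 ∧
    ContainsFullRows rows (k - (k + 2) / 3 + 1) (B \ A) ∧
    ContainsFullRows cols (k - (k + 2) / 3 + 1) (B \ A)

section aux
variable {V : Type*} {G : SimpleGraph V} {A B : Set V}

lemma IsSeparation.symm (h : IsSeparation G A B) : IsSeparation G B A :=
  ⟨by rw [Set.union_comm]; exact h.1, fun a ha b hb hadj => h.2 b hb a ha hadj.symm⟩

lemma walk_stay (hsep : IsSeparation G A B) {Γ : Set V}
    (hdisj : ∀ v ∈ Γ, v ∉ A ∩ B) :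
    ∀ {u v : Γ} (_ : (G.induce Γ).Walk u v), (u : V) ∈ A → (v : V) ∈ A := by
  intro u v p
  induction p with
  | nil => exact id
  | @cons a b c h p ih =>
    intro ha
    apply ih
    by_contra hbA
    have hbB : (b : V) ∈ B := by
      have h2 : (b : V) ∈ A ∨ (b : V) ∈ B :=
        (Set.mem_union _ _ _).mp (hsep.1.symm ▸ Set.mem_univ _)
      exact h2.resolve_left hbA
    have haB : (a : V) ∉ B := fun hB => hdisj a a.2 ⟨ha, hB⟩
    exact hsep.2 a ⟨ha, haB⟩ b ⟨hbB, hbA⟩ h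

lemma clean_subset (hsep : IsSeparation G A B) {Γ : Set V}
    (hconn : (G.induce Γ).Connected) (hdisj : ∀ v ∈ Γ, v ∉ A ∩ B) :
    Γ ⊆ A \ B ∨ Γ ⊆ B \ A := by
  obtain ⟨u⟩ := hconn.nonempty
  have hside : ∀ v ∈ Γ, v ∈ A ∨ v ∈ B := fun v hv => by
    exact (Set.mem_union _ _ _).mp (hsep.1.symm ▸ Set.mem_univ _)
  by_cases huA : (u : V) ∈ A
  · left
    intro v hv
    obtain ⟨p⟩ := hconn.preconnected u ⟨v, hv⟩
    have hvA := walk_stay hsep hdisj p huA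
    exact ⟨hvA, fun hB => hdisj v hv ⟨hvA, hB⟩⟩
  · right
    intro v hv
    have huB : (u : V) ∈ B := (hside u u.2).resolve_left huA
    obtain ⟨p⟩ := hconn.preconnected u ⟨v, hv⟩
    have hvB := walk_stay hsep.symm (fun w hw hw2 => hdisj w hw ⟨hw2.2, hw2.1⟩) p huB
    exact ⟨hvB, fun hA => hdisj v hv ⟨hA, hvB⟩⟩

end aux

lemma few_meet {V : Type*} [Fintype V] {k : ℕ} (fam : Fin k → Set V)
    (hdisj : ∀ i i', i ≠ i' → Disjoint (fam i) (fam i')) (T : Set V) :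
    {i : Fin k | (fam i ∩ T).Nonempty}.ncard ≤ T.ncard := by
  classical
  set M := {i : Fin k | (fam i ∩ T).Nonempty} with hM
  rcases M.eq_empty_or_nonempty with hE | ⟨i0, hi0⟩
  · simp [hE]
  · haveI : Nonempty V := ⟨hi0.some⟩
    set f : Fin k → V := fun i =>
      if h : (fam i ∩ T).Nonempty then h.some else Classical.arbitrary V with hf
    have hmem : ∀ i ∈ M, f i ∈ fam i ∩ T := by
      intro i hi
      have hi' : (fam i ∩ T).Nonempty := hi
      simp only [hf]
      rw [dif_pos hi']
      exact hi'.some_mem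
    apply Set.ncard_le_ncard_of_injOn f (fun i hi => (hmem i hi).2) ?_ (Set.toFinite T)
    intro i hi i' hi' heq
    by_contra hne
    exact (hdisj i i' hne).ne_of_mem (hmem i hi).1 (hmem i' hi').1 heq

lemma all_one_side {V : Type*} {k : ℕ} (rows cols : Fin k → Set V)
    (hmeet : ∀ i j, (rows i ∩ cols j).Nonempty)
    (S T : Set V) (hST : ∀ x, x ∈ S → x ∉ T)
    (CR CC : Set (Fin k))
    (hr : ∀ i ∈ CR, rows i ⊆ S ∨ rows i ⊆ T)
    (hc : ∀ j ∈ CC, cols j ⊆ S ∨ cols j ⊆ T)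
    {i0 : Fin k} (_hi0 : i0 ∈ CR) (hi0S : rows i0 ⊆ S)
    {j0 : Fin k} (hj0 : j0 ∈ CC) :
    (∀ i ∈ CR, rows i ⊆ S) ∧ (∀ j ∈ CC, cols j ⊆ S) := by
  have hcS : ∀ j ∈ CC, cols j ⊆ S := by
    intro j hj
    rcases hc j hj with h | h
    · exact h
    · obtain ⟨x, hx1, hx2⟩ := hmeet i0 j
      exact absurd (h hx2) (hST x (hi0S hx1))
  refine ⟨fun i hi => ?_, hcS⟩
  rcases hr i hi with h | h
  · exact h
  · obtain ⟨x, hx1, hx2⟩ := hmeet i j0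
    exact absurd (h hx1) (hST x (hcS j0 hj0 hx2))

/-- Let `W` be a wall of sidelength `k` in `G` and `(A, B)` a separation of order
`k' < k`.  Then exactly one of `A \ B`, `B \ A` contains at least `k - k'` full rows and
at least `k - k'` full columns of `W`. -/
theorem wall_side_of_separation {V : Type*} [Fintype V] (G : SimpleGraph V)
    {k : ℕ} (rows cols : Fin k → Set V) (hW : IsWall G k rows cols)
    (A B : Set V) (hsep : IsSeparation G A B) (k' : ℕ)
    (hord : (A ∩ B).ncard = k') (hk : k' < k) :
    ((ContainsFullRows rows (k - k') (A \ B) ∧ ContainsFullRows cols (k - k') (A \ B)) ∨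
      (ContainsFullRows rows (k - k') (B \ A) ∧
        ContainsFullRows cols (k - k') (B \ A))) ∧
    ¬ ((ContainsFullRows rows (k - k') (A \ B) ∧
        ContainsFullRows cols (k - k') (A \ B)) ∧
      (ContainsFullRows rows (k - k') (B \ A) ∧
        ContainsFullRows cols (k - k') (B \ A))) := by
  classical
  have hST : ∀ x, x ∈ A \ B → x ∉ B \ A := fun x hx hy => hx.2 hy.1
  -- clean rows/cols: avoid A ∩ B
  set CR : Set (Fin k) := {i | ∀ v ∈ rows i, v ∉ A ∩ B} with hCRdef
  set CC : Set (Fin k) := {j | ∀ v ∈ cols j, v ∉ A ∩ B} with hCCdef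
  have hcompl : ∀ (fam : Fin k → Set V),
      {i : Fin k | ∀ v ∈ fam i, v ∉ A ∩ B} = {i : Fin k | (fam i ∩ (A ∩ B)).Nonempty}ᶜ := by
    intro fam
    ext i
    simp only [Set.mem_setOf_eq, Set.mem_compl_iff, Set.nonempty_def, Set.mem_inter_iff]
    push_neg
    tauto
  have hcount : ∀ (fam : Fin k → Set V), (∀ i i', i ≠ i' → Disjoint (fam i) (fam i')) →
      k - k' ≤ {i : Fin k | ∀ v ∈ fam i, v ∉ A ∩ B}.ncard := by
    intro fam hdisj
    have h1 := few_meet fam hdisj (A ∩ B)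
    rw [hord] at h1
    have h2 := Set.ncard_add_ncard_compl {i : Fin k | (fam i ∩ (A ∩ B)).Nonempty}
      (Set.toFinite _) (Set.toFinite _)
    rw [Nat.card_eq_fintype_card, Fintype.card_fin] at h2
    rw [hcompl fam]
    omega
  have hCR : k - k' ≤ CR.ncard := hcount rows hW.rows_disj
  have hCC : k - k' ≤ CC.ncard := hcount cols hW.cols_disj
  have hrside : ∀ i ∈ CR, rows i ⊆ A \ B ∨ rows i ⊆ B \ A :=
    fun i hi => clean_subset hsep (hW.rows_conn i) hi
  have hcside : ∀ j ∈ CC, cols j ⊆ A \ B ∨ cols j ⊆ B \ A :=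
    fun j hj => clean_subset hsep (hW.cols_conn j) hj
  obtain ⟨i0, hi0⟩ : CR.Nonempty := by
    rw [← Set.ncard_pos (Set.toFinite _)]; omega
  obtain ⟨j0, hj0⟩ : CC.Nonempty := by
    rw [← Set.ncard_pos (Set.toFinite _)]; omega
  have contains : ∀ (S : Set V), (∀ i ∈ CR, rows i ⊆ S) → (∀ j ∈ CC, cols j ⊆ S) →
      ContainsFullRows rows (k - k') S ∧ ContainsFullRows cols (k - k') S := by
    intro S hr hc
    constructor
    · exact le_trans hCR (Set.ncard_le_ncard hr (Set.toFinite _))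
    · exact le_trans hCC (Set.ncard_le_ncard hc (Set.toFinite _))
  constructor
  · rcases hrside i0 hi0 with hi0S | hi0S
    · obtain ⟨h1, h2⟩ := all_one_side rows cols hW.row_meets_col (A \ B) (B \ A) hST
        CR CC hrside hcside hi0 hi0S hj0
      exact Or.inl (contains _ h1 h2)
    · obtain ⟨h1, h2⟩ := all_one_side rows cols hW.row_meets_col (B \ A) (A \ B)
        (fun x hx hy => hST x hy hx) CR CC (fun i hi => (hrside i hi).symm)
        (fun j hj => (hcside j hj).symm) hi0 hi0S hj0
      exact Or.inr (contains _ h1 h2)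
  · rintro ⟨⟨h1, -⟩, ⟨-, h2⟩⟩
    unfold ContainsFullRows at h1 h2
    obtain ⟨i, hi⟩ : {i : Fin k | rows i ⊆ A \ B}.Nonempty := by
      rw [← Set.ncard_pos (Set.toFinite _)]; omega
    obtain ⟨j, hj⟩ : {j : Fin k | cols j ⊆ B \ A}.Nonempty := by
      rw [← Set.ncard_pos (Set.toFinite _)]; omega
    obtain ⟨x, hx1, hx2⟩ := hW.row_meets_col i j
    exact hST x (hi hx1) (hj hx2)
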